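/- (Lemma 4) There exists a unique h† > 0 satisfying the fixed-point equation h† = −(180·b·L)/(π·ξ_L) · [1 − 1/(1 + a·exp(−b·((180/π)·arctan(h†/L) − a)))], and this h† is the unique global maximizer over h ∈ (0, ∞) of the function h ↦ (L² + h²)^{ξ_L/2} / (1 + a·exp(−b·((180/π)·arctan(h/L) − a))); in particular the maximizer is independent of any positive multiplicative constant (such as the transmit power P divided by the noise power σ_b²). -/

import Mathlib

/-!
Let `φ(h) = −(180·b·L)/(π·ξ_L)·(1 − p_B(h))` be the right-hand side of the fixed-point
equation. From `p_B' = p_B·(1 − p_B)·(180·b/π)·L/(L² + h²)` the derivative of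
`g(h) = (L² + h²)^{ξ_L/2}·p_B(h)` factors as `(L² + h²)^{ξ_L/2 − 1}·p_B(h)·ξ_L·(h − φ(h))`.
As `p_B` is increasing, `φ` is decreasing, so `h − φ(h)` is strictly increasing; it vanishes at
some `h† > 0` by the intermediate value theorem, because `0 < φ ≤ −(180·b·L)/(π·ξ_L)`.
So `g` strictly increases before `h†` and strictly decreases after it.
-/

/-- LoS probability for a UAV at height `h` directly above a point at horizontal
distance `L` from the receiver (the case `θ_w = 90°`). -/
noncomputable def pB (a b L h : ℝ) : ℝ :=
  1 / (1 + a * Real.exp (-b * ((180 / Real.pi) * Real.arctan (h / L) - a)))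

/-- The objective `h ↦ (L² + h²)^{ξ_L/2} · p_B(h)` (the effective SNR at Bob up to the
positive multiplicative constant `P/σ_b²`). -/
noncomputable def gV (a b L ξL h : ℝ) : ℝ :=
  (L ^ 2 + h ^ 2) ^ (ξL / 2) * pB a b L h

open Real Set

lemma exists_pos_isFixedPt_of_pos_of_le {φ : ℝ → ℝ} (hφ : Continuous φ) {K : ℝ}
    (hpos : ∀ x, 0 < φ x) (hle : ∀ x, φ x ≤ K) :
    ∃ x, 0 < x ∧ Function.IsFixedPt φ x := by
  have hK : 0 ≤ K := (hpos 0).le.trans (hle 0)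
  obtain ⟨x, -, hx⟩ := intermediate_value_Icc' hK (hφ.sub continuous_id).continuousOn
    ⟨sub_nonpos.2 (hle K), sub_nonneg.2 (hpos 0).le⟩
  have hfix : φ x = x := sub_eq_zero.1 hx
  exact ⟨x, hfix ▸ hpos x, hfix⟩

lemma lt_of_deriv_pos_of_deriv_neg {f : ℝ → ℝ} (hf : Differentiable ℝ f) {x₀ : ℝ}
    (hpos : ∀ x < x₀, 0 < deriv f x) (hneg : ∀ x, x₀ < x → deriv f x < 0) {x : ℝ}
    (hx : x ≠ x₀) : f x < f x₀ := by
  rcases hx.lt_or_gt with hlt | hgt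
  · refine strictMonoOn_of_deriv_pos (convex_Iic x₀) hf.continuous.continuousOn
      (fun y hy => hpos y ?_) hlt.le self_mem_Iic hlt
    simpa using hy
  · refine strictAntiOn_of_deriv_neg (convex_Ici x₀) hf.continuous.continuousOn
      (fun y hy => hneg y ?_) self_mem_Ici hgt.le hgt
    simpa using hy

lemma pB_pos (a b L h : ℝ) (ha : 0 < a) : 0 < pB a b L h := by
  unfold pB; positivity

lemma pB_lt_one (a b L h : ℝ) (ha : 0 < a) : pB a b L h < 1 := by
  unfold pB
  rw [div_lt_one (by positivity)]
  have := Real.exp_pos (-b * ((180 / π) * arctan (h / L) - a))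
  nlinarith

lemma hasDerivAt_pB (a b L : ℝ) (ha : 0 < a) (hL : 0 < L) (x : ℝ) :
    HasDerivAt (pB a b L)
      (pB a b L x * (1 - pB a b L x) * (b * (180 / π) * L / (L ^ 2 + x ^ 2))) x := by
  have hE := ((((((hasDerivAt_id x).div_const L).arctan.const_mul (180 / π)).sub_const a).const_mul
    (-b)).exp.const_mul a).const_add 1
  have hD : 0 < 1 + a * exp (-b * ((180 / π) * arctan (x / L) - a)) := by positivity
  refine ((hasDerivAt_const x (1 : ℝ)).div hE hD.ne').congr_deriv ?_
  simp only [pB, id]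
  field_simp
  ring

lemma strictMono_pB (a b L : ℝ) (ha : 0 < a) (hb : 0 < b) (hL : 0 < L) :
    StrictMono (pB a b L) := by
  refine strictMono_of_deriv_pos fun x => ?_
  rw [(hasDerivAt_pB a b L ha hL x).deriv]
  exact mul_pos (mul_pos (pB_pos a b L x ha) (sub_pos.2 (pB_lt_one a b L x ha))) (by positivity)

lemma continuous_pB (a b L : ℝ) (ha : 0 < a) (hL : 0 < L) : Continuous (pB a b L) :=
  continuous_iff_continuousAt.2 fun x => (hasDerivAt_pB a b L ha hL x).continuousAt

noncomputable def heightMap (a b L ξL h : ℝ) : ℝ :=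
  -(180 * b * L) / (π * ξL) * (1 - pB a b L h)

lemma hasDerivAt_gV (a b L ξL : ℝ) (ha : 0 < a) (hL : 0 < L) (hξ : ξL ≠ 0) (x : ℝ) :
    HasDerivAt (gV a b L ξL)
      ((L ^ 2 + x ^ 2) ^ (ξL / 2 - 1) * pB a b L x * (ξL * (x - heightMap a b L ξL x))) x := by
  have hq : 0 < L ^ 2 + x ^ 2 := by positivity
  have hr : HasDerivAt (fun h => (L ^ 2 + h ^ 2) ^ (ξL / 2))
      (2 * x * (ξL / 2) * (L ^ 2 + x ^ 2) ^ (ξL / 2 - 1)) x := by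
    simpa using ((hasDerivAt_pow 2 x).const_add (L ^ 2)).rpow_const (p := ξL / 2) (Or.inl hq.ne')
  refine (hr.mul (hasDerivAt_pB a b L ha hL x)).congr_deriv ?_
  have hsplit :
      (L ^ 2 + x ^ 2) ^ (ξL / 2) = (L ^ 2 + x ^ 2) ^ (ξL / 2 - 1) * (L ^ 2 + x ^ 2) := by
    rw [← rpow_add_one hq.ne']; ring_nf
  rw [hsplit, heightMap]
  field_simp
  ring

lemma heightMap_coeff_pos {b L ξL : ℝ} (hb : 0 < b) (hL : 0 < L) (hξ : ξL < 0) :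
    0 < -(180 * b * L) / (π * ξL) :=
  div_pos_of_neg_of_neg (by nlinarith [mul_pos hb hL]) (mul_neg_of_pos_of_neg pi_pos hξ)

lemma heightMap_pos {a b L ξL : ℝ} (ha : 0 < a) (hb : 0 < b) (hL : 0 < L) (hξ : ξL < 0)
    (h : ℝ) :
    0 < heightMap a b L ξL h :=
  mul_pos (heightMap_coeff_pos hb hL hξ) (sub_pos.2 (pB_lt_one a b L h ha))

lemma heightMap_le {a b L ξL : ℝ} (ha : 0 < a) (hb : 0 < b) (hL : 0 < L) (hξ : ξL < 0)
    (h : ℝ) :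
    heightMap a b L ξL h ≤ -(180 * b * L) / (π * ξL) :=
  mul_le_of_le_one_right (heightMap_coeff_pos hb hL hξ).le
    (sub_le_self 1 (pB_pos a b L h ha).le)

lemma strictAnti_heightMap {a b L ξL : ℝ} (ha : 0 < a) (hb : 0 < b) (hL : 0 < L)
    (hξ : ξL < 0) : StrictAnti (heightMap a b L ξL) := fun _ _ hxy =>
  mul_lt_mul_of_pos_left (sub_lt_sub_left (strictMono_pB a b L ha hb hL hxy) 1)
    (heightMap_coeff_pos hb hL hξ)

lemma continuous_heightMap (a b L ξL : ℝ) (ha : 0 < a) (hL : 0 < L) :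
    Continuous (heightMap a b L ξL) :=
  continuous_const.mul (continuous_const.sub (continuous_pB a b L ha hL))

/-- Lemma 4: there is a unique `h† > 0` satisfying the fixed-point equation
`h† = −(180·b·L)/(π·ξ_L)·(1 − p_B(h†))`, and this `h†` is the unique global maximizer of
`h ↦ (L² + h²)^{ξ_L/2}·p_B(h)` over `(0, ∞)`; in particular it also maximizes
`c·(L² + h²)^{ξ_L/2}·p_B(h)` for every constant `c > 0` (such as `c = P/σ_b²`). -/
theorem stmt_14 (a b L ξL : ℝ) (ha : 0 < a) (hb : 0 < b) (hL : 0 < L) (hξ : ξL < 0) :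
    ∃ h0 : ℝ, 0 < h0 ∧
      h0 = -(180 * b * L) / (Real.pi * ξL) * (1 - pB a b L h0) ∧
      (∀ h : ℝ, 0 < h →
        h = -(180 * b * L) / (Real.pi * ξL) * (1 - pB a b L h) → h = h0) ∧
      (∀ h : ℝ, 0 < h → h ≠ h0 → gV a b L ξL h < gV a b L ξL h0) ∧
      (∀ c : ℝ, 0 < c → ∀ h : ℝ, 0 < h → h ≠ h0 →
        c * gV a b L ξL h < c * gV a b L ξL h0) := by
  obtain ⟨h0, h0_pos, h0_fix⟩ := exists_pos_isFixedPt_of_pos_of_le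
    (continuous_heightMap a b L ξL ha hL) (heightMap_pos ha hb hL hξ) (heightMap_le ha hb hL hξ)
  have hres : StrictMono fun h => h - heightMap a b L ξL h := fun x y hxy => by
    linarith [strictAnti_heightMap ha hb hL hξ hxy]
  have hres_h0 : h0 - heightMap a b L ξL h0 = 0 := sub_eq_zero.2 h0_fix.symm
  have hderiv (x : ℝ) := hasDerivAt_gV a b L ξL ha hL hξ.ne x
  have hfactor_pos (x : ℝ) : 0 < (L ^ 2 + x ^ 2) ^ (ξL / 2 - 1) * pB a b L x := by
    have := pB_pos a b L x ha
    positivity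
  have hmax (h : ℝ) (hne : h ≠ h0) : gV a b L ξL h < gV a b L ξL h0 := by
    refine lt_of_deriv_pos_of_deriv_neg (fun x => (hderiv x).differentiableAt)
      (fun x hx => ?_) (fun x hx => ?_) hne <;> rw [(hderiv x).deriv]
    · exact mul_pos (hfactor_pos x) (mul_pos_of_neg_of_neg hξ (hres_h0 ▸ hres hx))
    · exact mul_neg_of_pos_of_neg (hfactor_pos x) (mul_neg_of_neg_of_pos hξ (hres_h0 ▸ hres hx))
  refine ⟨h0, h0_pos, h0_fix.symm, fun h _ hfix => hres.injective ?_, fun h _ => hmax h,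
    fun c hc h _ hne => mul_lt_mul_of_pos_left (hmax h hne) hc⟩
  exact (sub_eq_zero.2 hfix).trans hres_h0.symm
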